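/- There exists a constant C > 0 such that for all λ ∈ (0,1) and all (x,p) ∈ [0,1) × ℝ with |p| ≤ λ^{-1}, 𝒜_λ⁻(x,p) ≤ C·λ·|p|. -/

import Mathlib

open MeasureTheory Real

/-- The jump rate kernel `𝒥_λ(p,p')`. -/
noncomputable def Jker (lam p p' : ℝ) : ℝ :=
  ((1 + lam) / 64) * |p' - p| *
    Real.exp (-(1/2) * ((1 - lam)/2 * p - (1 + lam)/2 * p')^2)

/-- The Hamiltonian `H(x,p) = p²/2 + V(x)`. -/
noncomputable def Ham (V : ℝ → ℝ) (x p : ℝ) : ℝ := p^2 / 2 + V x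

/-- `𝒜_λ(x,p)`. -/
noncomputable def Acal (V : ℝ → ℝ) (lam x p : ℝ) : ℝ :=
  ∫ p' : ℝ, (Real.sqrt (2 * Ham V x p') - Real.sqrt (2 * Ham V x p)) * Jker lam p p'

/-- Negative part `𝒜_λ⁻`. -/
noncomputable def Aminus (V : ℝ → ℝ) (lam x p : ℝ) : ℝ := max (-(Acal V lam x p)) 0

/-!
With `c = 2 V(x) ≥ 0`, the map `f q = √(q² + c)` is convex and 1-Lipschitz, with slope
`d = p / √(p² + c) ∈ [-1, 1]` at `p`; hence `𝒜_λ(x,p) ≥ d · m ≥ -|m|`, where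
`m = ∫ (q - p) 𝒥_λ(p,q) dq` is the mean jump. In the variable `v = (1+λ)/2 · q - (1-λ)/2 · p`
the mean jump is a multiple of `∫ g(v - λp) e^{-v²/2} dv` with `g u = u |u|`. This vanishes at
`λp = 0` because `g` is odd, and `|g a - g b| ≤ |a - b| (|a| + |b|)` makes it `O(λ|p|)` as long as
`|λp| ≤ 1`.
-/

section SqrtSqAdd

variable {c : ℝ}

lemma mul_add_le_sqrt_sq_add_mul_sqrt_sq_add (hc : 0 ≤ c) (p q : ℝ) :
    p * q + c ≤ √(p ^ 2 + c) * √(q ^ 2 + c) := by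
  rw [← Real.sqrt_mul (by positivity)]
  exact (le_abs_self _).trans (Real.abs_le_sqrt (by nlinarith [sq_nonneg (p - q)]))

lemma div_sqrt_sq_add_mul_sub_le (hc : 0 ≤ c) (p q : ℝ) :
    p / √(p ^ 2 + c) * (q - p) ≤ √(q ^ 2 + c) - √(p ^ 2 + c) := by
  rcases (Real.sqrt_nonneg (p ^ 2 + c)).eq_or_lt with h | h
  · rw [← h, div_zero, zero_mul, sub_zero]
    exact Real.sqrt_nonneg _
  · rw [div_mul_eq_mul_div, div_le_iff₀ h]
    have hpq := mul_add_le_sqrt_sq_add_mul_sqrt_sq_add hc p q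
    have hsq := Real.mul_self_sqrt (show 0 ≤ p ^ 2 + c by positivity)
    nlinarith

lemma abs_div_sqrt_sq_add_le_one (hc : 0 ≤ c) (p : ℝ) : |p / √(p ^ 2 + c)| ≤ 1 := by
  rw [abs_div, abs_of_nonneg (Real.sqrt_nonneg _)]
  exact div_le_one_of_le₀ (Real.abs_le_sqrt (by linarith)) (Real.sqrt_nonneg _)

lemma neg_abs_le_div_sqrt_sq_add_mul (hc : 0 ≤ c) (p x : ℝ) : -|x| ≤ p / √(p ^ 2 + c) * x :=
  (abs_le.1 ((abs_mul _ _).trans_le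
    (mul_le_of_le_one_left (abs_nonneg x) (abs_div_sqrt_sq_add_le_one hc p)))).1

lemma abs_sqrt_sq_add_sub_sqrt_sq_add_le (hc : 0 ≤ c) (p q : ℝ) :
    |√(q ^ 2 + c) - √(p ^ 2 + c)| ≤ |q - p| := by
  have hp := div_sqrt_sq_add_mul_sub_le hc p q
  have hq := div_sqrt_sq_add_mul_sub_le hc q p
  have hdp := neg_abs_le_div_sqrt_sq_add_mul hc p (q - p)
  have hdq := neg_abs_le_div_sqrt_sq_add_mul hc q (p - q)
  rw [abs_sub_comm p q] at hdq
  exact abs_le.2 ⟨by linarith, by linarith⟩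

lemma neg_integral_sqrt_sq_add_sub_mul_le (hc : 0 ≤ c) (p : ℝ) {k : ℝ → ℝ} (hk : 0 ≤ k)
    (hk_meas : AEStronglyMeasurable k) (hk_int : Integrable fun q ↦ (q - p) * k q) :
    -∫ q, (√(q ^ 2 + c) - √(p ^ 2 + c)) * k q ≤ |∫ q, (q - p) * k q| := by
  set d := p / √(p ^ 2 + c)
  have hf_int : Integrable fun q ↦ (√(q ^ 2 + c) - √(p ^ 2 + c)) * k q := by
    refine hk_int.norm.mono' ?_ (Filter.Eventually.of_forall fun q ↦ ?_)
    · exact (Continuous.aestronglyMeasurable (by fun_prop)).mul hk_meas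
    · simp only [norm_mul, Real.norm_eq_abs, abs_of_nonneg (hk q)]
      exact mul_le_mul_of_nonneg_right (abs_sqrt_sq_add_sub_sqrt_sq_add_le hc p q) (hk q)
  have hsub : d * ∫ q, (q - p) * k q ≤ ∫ q, (√(q ^ 2 + c) - √(p ^ 2 + c)) * k q := by
    rw [← integral_const_mul]
    refine integral_mono (hk_int.const_mul d) hf_int fun q ↦ ?_
    simpa only [mul_assoc] using
      mul_le_mul_of_nonneg_right (div_sqrt_sq_add_mul_sub_le hc p q) (hk q)
  linarith [neg_abs_le_div_sqrt_sq_add_mul hc p (∫ q, (q - p) * k q)]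

end SqrtSqAdd

lemma abs_mul_abs_sub_mul_abs_le (x y : ℝ) : |(x * |x| - y * |y|)| ≤ |x - y| * (|x| + |y|) := by
  rcases le_total 0 x with hx | hx <;> rcases le_total 0 y with hy | hy <;>
  rcases le_total 0 (x - y) with hxy | hxy <;>
  simp only [abs_of_nonneg, abs_of_nonpos, hx, hy, hxy] <;>
  rw [abs_le] <;> constructor <;> nlinarith

noncomputable def signedSqGaussian (s v : ℝ) : ℝ := (v - s) * |v - s| * exp (-(1 / 2) * v ^ 2)

lemma integral_signedSqGaussian_zero : ∫ v, signedSqGaussian 0 v = 0 := by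
  have h := integral_neg_eq_self (signedSqGaussian 0) volume
  simp only [signedSqGaussian, sub_zero, abs_neg, neg_sq, neg_mul, integral_neg] at h ⊢
  linarith

lemma integrable_signedSqGaussian (s : ℝ) : Integrable (signedSqGaussian s) := by
  have hsq : Integrable fun v : ℝ ↦ v ^ 2 * exp (-(1 / 2) * v ^ 2) := by
    simpa only [Real.rpow_two] using
      integrable_rpow_mul_exp_neg_mul_sq (b := 1 / 2) (by norm_num) (s := 2) (by norm_num)
  have hexp := integrable_exp_neg_mul_sq (b := 1 / 2) (by norm_num)
  refine ((hsq.add (hexp.const_mul (s ^ 2))).const_mul 2).mono'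
    (Continuous.aestronglyMeasurable (by unfold signedSqGaussian; fun_prop))
    (Filter.Eventually.of_forall fun v ↦ ?_)
  rw [signedSqGaussian, norm_mul, norm_mul, Real.norm_eq_abs, Real.norm_eq_abs, abs_abs,
    Real.norm_of_nonneg (exp_pos _).le, ← pow_two, sq_abs, Pi.add_apply]
  nlinarith [sq_nonneg (v + s), exp_pos (-(1 / 2) * v ^ 2)]

lemma integrable_one_add_two_mul_abs_mul_gaussian :
    Integrable fun v : ℝ ↦ (1 + 2 * |v|) * exp (-(1 / 2) * v ^ 2) := by
  have h := (integrable_exp_neg_mul_sq (b := 1 / 2) (by norm_num)).add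
    ((integrable_mul_exp_neg_mul_sq (b := 1 / 2) (by norm_num)).norm.const_mul 2)
  refine h.congr (Filter.Eventually.of_forall fun v ↦ ?_)
  simp only [Pi.add_apply, norm_mul, Real.norm_eq_abs, abs_of_pos (exp_pos _)]
  ring

lemma integral_one_add_two_mul_abs_mul_gaussian_pos :
    0 < ∫ v : ℝ, (1 + 2 * |v|) * exp (-(1 / 2) * v ^ 2) := by
  refine (integral_pos_iff_support_of_nonneg (fun v ↦ by positivity)
    integrable_one_add_two_mul_abs_mul_gaussian).2 ?_
  rw [Function.support_eq_univ fun v ↦ by positivity]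
  simp

lemma abs_integral_signedSqGaussian_le {s : ℝ} (hs : |s| ≤ 1) :
    |∫ v, signedSqGaussian s v| ≤ (∫ v : ℝ, (1 + 2 * |v|) * exp (-(1 / 2) * v ^ 2)) * |s| := by
  rw [← sub_zero (∫ v, signedSqGaussian s v), ← integral_signedSqGaussian_zero,
    ← integral_sub (integrable_signedSqGaussian s) (integrable_signedSqGaussian 0),
    ← integral_mul_const |s|]
  refine (Real.norm_eq_abs _).symm.trans_le <| norm_integral_le_of_norm_le
    (integrable_one_add_two_mul_abs_mul_gaussian.mul_const _)
    (Filter.Eventually.of_forall fun v ↦ ?_)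
  have hv : |v - s| ≤ 1 + |v| := by linarith [abs_sub v s]
  rw [signedSqGaussian, signedSqGaussian, sub_zero, ← sub_mul, norm_mul, Real.norm_eq_abs,
    Real.norm_of_nonneg (exp_pos _).le, mul_right_comm]
  refine mul_le_mul_of_nonneg_right ?_ (exp_pos _).le
  calc |((v - s) * |v - s| - v * |v|)|
      ≤ |v - s - v| * (|v - s| + |v|) := abs_mul_abs_sub_mul_abs_le _ _
    _ ≤ |s| * (1 + 2 * |v|) := by
      rw [sub_sub_cancel_left, abs_neg]
      exact mul_le_mul_of_nonneg_left (by linarith) (abs_nonneg s)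
    _ = (1 + 2 * |v|) * |s| := mul_comm _ _

section JumpKernel

variable {lam : ℝ}

lemma Jker_nonneg (hl : 0 ≤ 1 + lam) (p q : ℝ) : 0 ≤ Jker lam p q := by
  unfold Jker; positivity

lemma continuous_Jker (lam p : ℝ) : Continuous (Jker lam p) := by
  unfold Jker; fun_prop

lemma sub_mul_Jker_eq (hl : 0 < 1 + lam) (p q : ℝ) :
    (q - p) * Jker lam p q =
      (16 * (1 + lam))⁻¹ * signedSqGaussian (lam * p) ((1 + lam) / 2 * q - (1 - lam) / 2 * p) := by
  have hshift : (1 + lam) / 2 * q - (1 - lam) / 2 * p - lam * p = (1 + lam) / 2 * (q - p) := by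
    ring
  have hsymm : ((1 - lam) / 2 * p - (1 + lam) / 2 * q) ^ 2 =
      ((1 + lam) / 2 * q - (1 - lam) / 2 * p) ^ 2 := by ring
  simp only [Jker, signedSqGaussian, hshift, hsymm, abs_mul, abs_of_pos (half_pos hl)]
  field_simp
  ring

lemma integrable_sub_mul_Jker (hl : 0 < 1 + lam) (p : ℝ) :
    Integrable fun q ↦ (q - p) * Jker lam p q := by
  simp only [sub_mul_Jker_eq hl]
  exact (((integrable_signedSqGaussian (lam * p)).comp_sub_right
    ((1 - lam) / 2 * p)).comp_mul_left' (half_pos hl).ne').const_mul _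

lemma integral_sub_mul_Jker (hl : 0 < 1 + lam) (p : ℝ) :
    ∫ q, (q - p) * Jker lam p q = (8 * (1 + lam) ^ 2)⁻¹ * ∫ v, signedSqGaussian (lam * p) v := by
  simp only [sub_mul_Jker_eq hl]
  rw [integral_const_mul, Measure.integral_comp_mul_left
      (fun w ↦ signedSqGaussian (lam * p) (w - (1 - lam) / 2 * p)),
    integral_sub_right_eq_self (μ := volume), abs_of_pos (inv_pos.2 (half_pos hl)), smul_eq_mul,
    ← mul_assoc]
  congr 1
  field_simp
  ring

lemma abs_integral_sub_mul_Jker_le (hl : 0 ≤ lam) {p : ℝ} (hp : |lam * p| ≤ 1) :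
    |∫ q, (q - p) * Jker lam p q| ≤
      (∫ v : ℝ, (1 + 2 * |v|) * exp (-(1 / 2) * v ^ 2)) / 8 * (lam * |p|) := by
  have hfactor : (8 * (1 + lam) ^ 2)⁻¹ ≤ 8⁻¹ := inv_anti₀ (by norm_num) (by nlinarith)
  have hlp : lam * |p| = |lam * p| := by rw [abs_mul, abs_of_nonneg hl]
  rw [integral_sub_mul_Jker (by linarith), abs_mul, abs_of_pos (by positivity), hlp]
  calc _ ≤ 8⁻¹ * ((∫ v : ℝ, (1 + 2 * |v|) * exp (-(1 / 2) * v ^ 2)) * |lam * p|) :=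
        mul_le_mul hfactor (abs_integral_signedSqGaussian_le hp) (abs_nonneg _) (by norm_num)
    _ = _ := by ring

end JumpKernel

lemma two_mul_Ham (V : ℝ → ℝ) (x p : ℝ) : 2 * Ham V x p = p ^ 2 + 2 * V x := by
  unfold Ham; ring

theorem stmt3_general (V : ℝ → ℝ) (hVnn : ∀ x, 0 ≤ V x) :
    ∃ C > 0, ∀ lam ∈ Set.Ioo (0:ℝ) 1, ∀ x ∈ Set.Ico (0:ℝ) 1, ∀ p : ℝ,
      |p| ≤ lam⁻¹ → Aminus V lam x p ≤ C * lam * |p| := by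
  have hK := integral_one_add_two_mul_abs_mul_gaussian_pos
  refine ⟨(∫ v : ℝ, (1 + 2 * |v|) * exp (-(1 / 2) * v ^ 2)) / 8, by positivity, ?_⟩
  rintro lam ⟨hl0, -⟩ x - p hp
  have hlp : |lam * p| ≤ 1 := by
    rw [abs_mul, abs_of_pos hl0]
    exact (mul_le_mul_of_nonneg_left hp hl0.le).trans (mul_inv_cancel₀ hl0.ne').le
  have hA : -Acal V lam x p ≤ |∫ q, (q - p) * Jker lam p q| := by
    simpa only [Acal, two_mul_Ham] using
      neg_integral_sqrt_sq_add_sub_mul_le (by linarith [hVnn x]) p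
        (Jker_nonneg (by linarith) p) (continuous_Jker lam p).aestronglyMeasurable
        (integrable_sub_mul_Jker (by linarith) p)
  rw [Aminus, mul_assoc]
  exact max_le (hA.trans (abs_integral_sub_mul_Jker_le hl0.le hlp)) (by positivity)

theorem stmt3 (V : ℝ → ℝ) (hV : ContDiff ℝ 1 V) (hper : ∀ x, V (x + 1) = V x)
    (hVnn : ∀ x, 0 ≤ V x) :
    ∃ C > 0, ∀ lam ∈ Set.Ioo (0:ℝ) 1, ∀ x ∈ Set.Ico (0:ℝ) 1, ∀ p : ℝ,
      |p| ≤ lam⁻¹ → Aminus V lam x p ≤ C * lam * |p| :=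
  stmt3_general V hVnn
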